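/- The map Φ is injective on ℝ², and its range is exactly the open region {(X,Y) ∈ ℝ² : 0 < Y < 2·𝒴*(X)}; hence Φ is a bijection from ℝ² onto this subset of the upper half plane. -/

import Mathlib

noncomputable section

open Real MeasureTheory

/-- The real cube root. -/
def cbrt (x : ℝ) : ℝ := Real.sign x * |x| ^ ((1 : ℝ) / 3)

/-- The profile `Ψ₁`, inverse of `X ↦ -X - X³`. -/
def Psi1 (X : ℝ) : ℝ :=
  cbrt (-X / 2 + Real.sqrt (1 / 27 + X ^ 2 / 4)) +
    cbrt (-X / 2 - Real.sqrt (1 / 27 + X ^ 2 / 4))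

/-- The normalising constant `p* = (4/(9π³))·Γ(1/4)⁴`. -/
def pStar : ℝ := (4 / (9 * π ^ 3)) * Real.Gamma (1 / 4) ^ 4

/-- The displacement curve `𝒴*(X) = ∫₀^∞ db / (1 + 3Ψ₁(p*(X - b²))²)`. -/
def Ystar (X : ℝ) : ℝ :=
  ∫ b in Set.Ioi (0 : ℝ), 1 / (1 + 3 * (Psi1 (pStar * (X - b ^ 2))) ^ 2)

/-- The map `Φ(a,b) = (a + b² + p*²a³, ∫_{-∞}^b db̃/(1 + 3Ψ₁(p*(a + p*²a³ + b² - b̃²))²))`. -/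
def Phi (p : ℝ × ℝ) : ℝ × ℝ :=
  (p.1 + p.2 ^ 2 + pStar ^ 2 * p.1 ^ 3,
    ∫ t in Set.Iio p.2,
      1 / (1 + 3 * (Psi1 (pStar * (p.1 + pStar ^ 2 * p.1 ^ 3 + p.2 ^ 2 - t ^ 2))) ^ 2))

/-!
Put `c = a + p*²a³ + b²`. Then `Φ(a, b) = (c, F_c b)`, where `F_c b = ∫_{-∞}^b f_c` and
`f_c t = 1 / (1 + 3 Ψ₁(p*(c - t²))²)` is positive and even. Since `a ↦ a + p*²a³` is a bijection
of `ℝ`, so is `(a, b) ↦ (c, b)` of `ℝ²`. Since `1 + 3 Ψ₁(X)² ≥ |X|^{2/3}`, the density `f_c` decays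
like `|t|^{-4/3}` and is integrable, so `F_c` is a continuous strictly increasing bijection of `ℝ`
onto `(0, ∫ f_c) = (0, 2 𝒴*(c))`.
-/

open Set Filter Topology

lemma cbrt_pow_three (x : ℝ) : cbrt x ^ 3 = x := by
  have h : (|x| ^ ((1 : ℝ) / 3)) ^ 3 = |x| := by
    rw [← Real.rpow_natCast, ← Real.rpow_mul (abs_nonneg x)]; norm_num
  rcases lt_trichotomy x 0 with hx | rfl | hx
  · rw [cbrt, mul_pow, h, Real.sign_of_neg hx, abs_of_neg hx]; ring
  · simp [cbrt]
  · rw [cbrt, mul_pow, h, Real.sign_of_pos hx, abs_of_pos hx]; ring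

lemma Psi1_add_pow_three (X : ℝ) : Psi1 X + Psi1 X ^ 3 = -X := by
  obtain ⟨s, hs, hPsi⟩ : ∃ s, s ^ 2 = 1 / 27 + X ^ 2 / 4 ∧
      Psi1 X = cbrt (-X / 2 + s) + cbrt (-X / 2 - s) :=
    ⟨_, Real.sq_sqrt (by positivity), rfl⟩
  have hA := cbrt_pow_three (-X / 2 + s)
  have hB := cbrt_pow_three (-X / 2 - s)
  -- Cardano: the two cube roots multiply to `-1/3`, so `(α + β)³ = α³ + β³ - (α + β)`.
  have hprod : cbrt (-X / 2 + s) * cbrt (-X / 2 - s) = -1 / 3 := by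
    refine (Odd.strictMono_pow (by decide : Odd 3)).injective ?_
    simp only [mul_pow, hA, hB]
    linear_combination -hs
  rw [hPsi]
  linear_combination hA + hB + 3 * (cbrt (-X / 2 + s) + cbrt (-X / 2 - s)) * hprod

section Cubic

variable {c : ℝ}

lemma strictMono_add_mul_pow_three (hc : 0 ≤ c) : StrictMono fun u : ℝ => u + c * u ^ 3 :=
  strictMono_id.add_monotone fun _ _ h =>
    mul_le_mul_of_nonneg_left ((Odd.strictMono_pow (by decide : Odd 3)).monotone h) hc

lemma bijective_add_mul_pow_three (hc : 0 ≤ c) :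
    Function.Bijective fun u : ℝ => u + c * u ^ 3 := by
  refine ⟨(strictMono_add_mul_pow_three hc).injective,
    Continuous.surjective (by fun_prop) ?_ ?_⟩
  · refine tendsto_atTop_mono' _ ?_ tendsto_id
    filter_upwards [eventually_ge_atTop 0] with u hu
    simp only [id]
    nlinarith [mul_nonneg hc (pow_nonneg hu 3)]
  · refine tendsto_atBot_mono' _ ?_ tendsto_id
    filter_upwards [eventually_le_atBot 0] with u hu
    simp only [id]
    nlinarith [mul_nonneg hc (pow_nonneg (neg_nonneg.2 hu) 3)]

end Cubic

lemma Psi1_neg_add_pow_three (u : ℝ) : Psi1 (-(u + u ^ 3)) = u := by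
  have h := Psi1_add_pow_three (-(u + u ^ 3))
  rw [neg_neg] at h
  simpa using (strictMono_add_mul_pow_three zero_le_one).injective (by simpa using h)

lemma Psi1_strictAnti : StrictAnti Psi1 := fun X Y hXY => by
  by_contra! h
  have := (strictMono_add_mul_pow_three zero_le_one).monotone h
  simp only [one_mul, Psi1_add_pow_three] at this
  linarith

@[fun_prop]
lemma continuous_Psi1 : Continuous Psi1 := by
  have : Monotone fun X => Psi1 (-X) := fun X Y h => Psi1_strictAnti.antitone (neg_le_neg h)
  have hcont := this.continuous_of_surjective fun u => ⟨u + u ^ 3, Psi1_neg_add_pow_three u⟩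
  simpa [Function.comp_def] using hcont.comp continuous_neg

lemma sq_le_one_add_three_mul_Psi1_sq_pow_three (X : ℝ) : X ^ 2 ≤ (1 + 3 * Psi1 X ^ 2) ^ 3 := by
  have hX : X = -(Psi1 X + Psi1 X ^ 3) := by linarith [Psi1_add_pow_three X]
  generalize Psi1 X = u at hX ⊢
  subst hX
  nlinarith [pow_nonneg (sq_nonneg u) 2, pow_nonneg (sq_nonneg u) 3]

lemma abs_rpow_two_thirds_le_one_add_three_mul_Psi1_sq (X : ℝ) :
    |X| ^ (2 / 3 : ℝ) ≤ 1 + 3 * Psi1 X ^ 2 := by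
  refine le_of_pow_le_pow_left₀ three_ne_zero (by positivity) ?_
  rw [← Real.rpow_natCast, ← Real.rpow_mul (abs_nonneg X)]
  norm_num
  simpa using sq_le_one_add_three_mul_Psi1_sq_pow_three X

lemma pStar_pos : 0 < pStar := by
  have := Real.Gamma_pos_of_pos (by norm_num : (0 : ℝ) < 1 / 4)
  unfold pStar
  positivity

section PrimitiveIio

variable {E : Type*} [NormedAddCommGroup E] [NormedSpace ℝ E] {g : ℝ → E}

lemma continuous_integral_Iio (hg : Integrable g) : Continuous fun b => ∫ t in Iio b, g t :=
  continuous_iff_continuousAt.2 fun b =>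
    (hg.integrableOn.continuousOn_Iic_primitive_Iio (a₀ := b + 1)).continuousAt
      (Iic_mem_nhds (lt_add_one b))

lemma tendsto_integral_Iio_atTop (hg : Integrable g) :
    Tendsto (fun b => ∫ t in Iio b, g t) atTop (𝓝 (∫ t, g t)) := by
  simpa using tendsto_setIntegral_of_monotone (fun _ => measurableSet_Iio)
    (fun _ _ h => Iio_subset_Iio h) hg.integrableOn

lemma tendsto_integral_Iio_atBot (hg : Integrable g) :
    Tendsto (fun b => ∫ t in Iio b, g t) atBot (𝓝 0) := by
  have hInter : ⋂ b : ℝ, Iio (-b) = ∅ :=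
    eq_empty_of_forall_notMem fun x hx => (mem_iInter.1 hx (-x)).ne (neg_neg x).symm
  have h := tendsto_setIntegral_of_antitone (fun _ => measurableSet_Iio)
    (fun _ _ h => Iio_subset_Iio (neg_le_neg h)) ⟨0, hg.integrableOn⟩
  rw [hInter, Measure.restrict_empty, integral_zero_measure] at h
  simpa [Function.comp_def] using h.comp tendsto_neg_atBot_atTop

variable {f : ℝ → ℝ}

lemma strictMono_integral_Iio_of_pos (hf : Integrable f) (hpos : ∀ t, 0 < f t) :
    StrictMono fun b => ∫ t in Iio b, f t := fun a b hab => by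
  have h := intervalIntegral.intervalIntegral_pos_of_pos hf.intervalIntegrable hpos hab
  rw [← intervalIntegral.integral_Iio_sub_Iio' hf.integrableOn hf.integrableOn] at h
  exact sub_pos.1 h

lemma range_integral_Iio_of_pos (hf : Integrable f) (hpos : ∀ t, 0 < f t) :
    range (fun b => ∫ t in Iio b, f t) = Ioo 0 (∫ t, f t) := by
  have hmono := strictMono_integral_Iio_of_pos hf hpos
  have hbot := tendsto_integral_Iio_atBot hf
  have htop := tendsto_integral_Iio_atTop hf
  refine Subset.antisymm ?_ fun y ⟨h0, h1⟩ => ?_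
  · rintro _ ⟨b, rfl⟩
    exact ⟨(hmono.monotone.le_of_tendsto hbot (b - 1)).trans_lt (hmono (sub_one_lt b)),
      (hmono (lt_add_one b)).trans_le (hmono.monotone.ge_of_tendsto htop (b + 1))⟩
  exact mem_range_of_exists_le_of_exists_ge (continuous_integral_Iio hf)
    ((hbot.eventually (eventually_lt_nhds h0)).exists.imp fun _ => le_of_lt)
    ((htop.eventually (eventually_gt_nhds h1)).exists.imp fun _ => le_of_lt)

end PrimitiveIio

/-- The integrand of `Φ₂` and `𝒴*`, at level `c = a + p²a³ + b²`. -/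
def phiDensity (p c t : ℝ) : ℝ := 1 / (1 + 3 * Psi1 (p * (c - t ^ 2)) ^ 2)

section PhiDensity

variable {p : ℝ} (c : ℝ)

lemma phiDensity_pos (t : ℝ) : 0 < phiDensity p c t := by
  unfold phiDensity; positivity

lemma phiDensity_abs (t : ℝ) : phiDensity p c |t| = phiDensity p c t := by
  simp only [phiDensity, sq_abs]

lemma continuous_phiDensity : Continuous (phiDensity p c) :=
  continuous_const.div (by fun_prop) fun t => by positivity

lemma phiDensity_le_rpow (hp : 0 < p) {t : ℝ} (ht : 0 < t) (hct : 2 * |c| ≤ t ^ 2) :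
    phiDensity p c t ≤ (p / 2) ^ (-(2 / 3) : ℝ) * t ^ (-(4 / 3) : ℝ) := by
  have hpt : 0 < p * t ^ 2 / 2 := by positivity
  have hX : p * t ^ 2 / 2 ≤ |p * (c - t ^ 2)| :=
    le_abs.2 (Or.inr (by nlinarith [le_abs_self c]))
  calc phiDensity p c t ≤ 1 / |p * (c - t ^ 2)| ^ (2 / 3 : ℝ) :=
        one_div_le_one_div_of_le (Real.rpow_pos_of_pos (hpt.trans_le hX) _)
          (abs_rpow_two_thirds_le_one_add_three_mul_Psi1_sq _)
    _ ≤ 1 / (p * t ^ 2 / 2) ^ (2 / 3 : ℝ) :=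
        one_div_le_one_div_of_le (by positivity) (Real.rpow_le_rpow hpt.le hX (by norm_num))
    _ = (p / 2) ^ (-(2 / 3) : ℝ) * t ^ (-(4 / 3) : ℝ) := by
        rw [show p * t ^ 2 / 2 = p / 2 * t ^ 2 by ring,
          Real.mul_rpow (by positivity) (by positivity), ← Real.rpow_natCast t 2,
          ← Real.rpow_mul ht.le, Real.rpow_neg (by positivity), Real.rpow_neg ht.le]
        norm_num
        ring

lemma integrable_phiDensity (hp : 0 < p) : Integrable (phiDensity p c) := by
  have hdecay : IntegrableAtFilter (fun t : ℝ => t ^ (-(4 / 3) : ℝ)) atTop :=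
    integrableAtFilter_rpow_atTop_iff.2 (by norm_num)
  refine (continuous_phiDensity c).locallyIntegrable
    |>.integrable_of_isBigO_atTop_of_norm_isNegInvariant
      (ae_of_all _ fun t => by simp [phiDensity]) ?_ hdecay
  refine Asymptotics.IsBigO.of_bound ((p / 2) ^ (-(2 / 3) : ℝ)) ?_
  filter_upwards [eventually_gt_atTop 0,
    (tendsto_pow_atTop two_ne_zero).eventually_ge_atTop (2 * |c|)] with t ht hct
  rw [Real.norm_of_nonneg (phiDensity_pos c t).le, Real.norm_of_nonneg (by positivity)]
  exact phiDensity_le_rpow c hp ht hct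

end PhiDensity

lemma integral_phiDensity_eq_two_mul_Ystar (c : ℝ) : ∫ t, phiDensity pStar c t = 2 * Ystar c := by
  calc ∫ t, phiDensity pStar c t = ∫ t, phiDensity pStar c |t| := by simp only [phiDensity_abs]
    _ = 2 * Ystar c := integral_comp_abs

def phiLevel (q : ℝ × ℝ) : ℝ × ℝ := (q.1 + pStar ^ 2 * q.1 ^ 3 + q.2 ^ 2, q.2)

def phiFiber (q : ℝ × ℝ) : ℝ × ℝ := (q.1, ∫ t in Iio q.2, phiDensity pStar q.1 t)

lemma Phi_eq_comp : Phi = phiFiber ∘ phiLevel :=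
  funext fun q => Prod.ext (by simp only [Phi, phiFiber, phiLevel, Function.comp]; ring) rfl

lemma bijective_phiLevel : Function.Bijective phiLevel := by
  have hcubic := bijective_add_mul_pow_three (sq_nonneg pStar)
  refine ⟨fun ⟨a, b⟩ ⟨a', b'⟩ h => ?_, fun ⟨c, b⟩ => ?_⟩
  · simp only [phiLevel, Prod.mk.injEq] at h
    obtain ⟨h, rfl⟩ := h
    rw [hcubic.injective (add_right_cancel h : a + pStar ^ 2 * a ^ 3 = a' + pStar ^ 2 * a' ^ 3)]
  · obtain ⟨a, ha⟩ := hcubic.surjective (c - b ^ 2)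
    exact ⟨(a, b), Prod.ext (by simp only [phiLevel] at ha ⊢; linarith) rfl⟩

lemma injective_phiFiber : Function.Injective phiFiber := fun ⟨c, b⟩ ⟨c', b'⟩ h => by
  simp only [phiFiber, Prod.mk.injEq] at h
  obtain ⟨rfl, h⟩ := h
  rw [(strictMono_integral_Iio_of_pos (integrable_phiDensity c pStar_pos)
    (phiDensity_pos c)).injective h]

lemma range_phiFiber : range phiFiber = {q : ℝ × ℝ | 0 < q.2 ∧ q.2 < 2 * Ystar q.1} := by
  ext ⟨c, y⟩
  rw [mem_ofPred_eq, ← mem_Ioo, ← integral_phiDensity_eq_two_mul_Ystar,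
    ← range_integral_Iio_of_pos (integrable_phiDensity c pStar_pos) (phiDensity_pos c)]
  constructor
  · rintro ⟨⟨c', b⟩, h⟩
    simp only [phiFiber, Prod.mk.injEq] at h
    obtain ⟨rfl, rfl⟩ := h
    exact ⟨b, rfl⟩
  · rintro ⟨b, rfl⟩
    exact ⟨(c, b), rfl⟩

/-- `Φ` is a bijection from `ℝ²` onto the region `{(X,Y) : 0 < Y < 2𝒴*(X)}`. -/
theorem Phi_bijective :
    Function.Injective Phi ∧
    Set.range Phi = {q : ℝ × ℝ | 0 < q.2 ∧ q.2 < 2 * Ystar q.1} := by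
  rw [Phi_eq_comp, range_comp, bijective_phiLevel.surjective.range_eq, image_univ]
  exact ⟨injective_phiFiber.comp bijective_phiLevel.injective, range_phiFiber⟩
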